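/- Let F : ℝ → ℂ be twice continuously differentiable with F(t̂) = 0, F'(t̂) ≠ 0, and Re(F''(t̂)·conj(F'(t̂))) ≠ 0. Then the Chu–Mei quotient is unbounded at the singular point t̂: with a(t) = |F(t)|, the quantity |a''(t)/a(t)| tends to +∞ as t → t̂ through values t ≠ t̂ (note F(t) ≠ 0 for t ≠ t̂ close to t̂, so the quotient is defined there). Hence boundedness of the Chu–Mei quotient at a singular point is a non-generic, exceptional property. -/

import Mathlib

open Real Filter Topology

/-! Writing `F = a e^{iφ}`, the Chu–Mei quotient is `a''/a = Re(F''/F) + φ'²` with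
`φ' = Im(F'/F)`. At a simple zero `t₀` the phase velocity `φ'` stays bounded: it tends to
`Im(F''(t₀)/F'(t₀))/2`, by L'Hôpital applied to the Wronskian `Im(F' F̄) = |F|² φ'`, which vanishes
to second order. On the other hand `(t - t₀) Re(F''/F) → Re(F''(t₀)/F'(t₀))`, which is nonzero
exactly when `Re(F''(t₀) conj F'(t₀)) ≠ 0`. Hence `|a''/a|` blows up like `|t - t₀|⁻¹`. -/

open ComplexConjugate

lemma HasDerivAt.complex_re {f : ℝ → ℂ} {f' : ℂ} {t : ℝ} (h : HasDerivAt f f' t) :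
    HasDerivAt (fun s => (f s).re) f'.re t :=
  Complex.reCLM.hasFDerivAt.comp_hasDerivAt t h

lemma HasDerivAt.complex_im {f : ℝ → ℂ} {f' : ℂ} {t : ℝ} (h : HasDerivAt f f' t) :
    HasDerivAt (fun s => (f s).im) f'.im t :=
  Complex.imCLM.hasFDerivAt.comp_hasDerivAt t h

lemma Complex.re_div_eq_re_mul_conj (z w : ℂ) :
    (z / w).re = (z * conj w).re / Complex.normSq w := by
  simp only [Complex.div_re, Complex.mul_re, Complex.conj_re, Complex.conj_im]
  ring

lemma Complex.im_div_eq_im_mul_conj (z w : ℂ) :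
    (z / w).im = (z * conj w).im / Complex.normSq w := by
  simp only [Complex.div_im, Complex.mul_im, Complex.conj_re, Complex.conj_im]
  ring

lemma HasDerivAt.complex_norm {F : ℝ → ℂ} {F' : ℂ} {t : ℝ} (hF : HasDerivAt F F' t)
    (ht : F t ≠ 0) : HasDerivAt (fun s => ‖F s‖) (‖F t‖ * (F' / F t).re) t := by
  have h := hF.norm_sq.sqrt (by positivity)
  simp only [Real.sqrt_sq (norm_nonneg _)] at h
  convert h using 1
  have hnorm : ‖F t‖ ≠ 0 := norm_ne_zero_iff.mpr ht
  rw [Complex.div_re, Complex.normSq_eq_norm_sq, Complex.inner]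
  simp only [Complex.mul_re, Complex.conj_re, Complex.conj_im]
  field_simp
  ring

lemma deriv_deriv_norm_div_norm {F F' : ℝ → ℂ} {F'' : ℂ} {t : ℝ}
    (hF : ∀ s, HasDerivAt F (F' s) s) (hF' : HasDerivAt F' F'' t) (ht : F t ≠ 0) :
    deriv (deriv fun s => ‖F s‖) t / ‖F t‖ = (F' t / F t).im ^ 2 + (F'' / F t).re := by
  have hderiv : deriv (fun s => ‖F s‖) =ᶠ[𝓝 t] fun s => ‖F s‖ * (F' s / F s).re := by
    filter_upwards [(hF t).continuousAt.eventually_ne ht] with s hs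
    exact ((hF s).complex_norm hs).deriv
  have hlogDeriv : HasDerivAt (fun s => F' s / F s) (F'' / F t - (F' t / F t) ^ 2) t := by
    refine (hF'.fun_div (hF t) ht).congr_deriv ?_
    field_simp
  rw [hderiv.deriv_eq, (((hF t).complex_norm ht).fun_mul hlogDeriv.complex_re).deriv]
  have hnorm : ‖F t‖ ≠ 0 := norm_ne_zero_iff.mpr ht
  simp only [Complex.sub_re, pow_two, Complex.mul_re]
  field_simp
  ring

lemma HasDerivAt.tendsto_div_sub_of_eq_zero {F : ℝ → ℂ} {c : ℂ} {t₀ : ℝ}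
    (hF : HasDerivAt F c t₀) (h0 : F t₀ = 0) :
    Tendsto (fun t => F t / (t - t₀ : ℝ)) (𝓝[≠] t₀) (𝓝 c) := by
  refine (hasDerivAt_iff_tendsto_slope.mp hF).congr fun t => ?_
  rw [slope_def_module, h0, sub_zero, Complex.real_smul, Complex.ofReal_inv, inv_mul_eq_div]

lemma tendsto_im_div_of_simple_zero {F F' F'' : ℝ → ℂ} {t₀ : ℝ}
    (hF : ∀ t, HasDerivAt F (F' t) t) (hF' : ∀ t, HasDerivAt F' (F'' t) t)
    (hF'' : ContinuousAt F'' t₀) (h0 : F t₀ = 0) (h1 : F' t₀ ≠ 0) :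
    Tendsto (fun t => (F' t / F t).im) (𝓝[≠] t₀) (𝓝 ((F'' t₀ / F' t₀).im / 2)) := by
  have hslope := (hF t₀).tendsto_div_sub_of_eq_zero h0
  set W : ℝ → ℝ := fun t => (F' t * conj (F t)).im
  -- the term `Im(F' conj F')` of `W'` vanishes
  have hW : ∀ t, HasDerivAt W (F'' t * conj (F t)).im t := by
    intro t
    refine ((hF' t).fun_mul (hF t).star).complex_im.congr_deriv ?_
    simp only [Complex.add_im, Complex.mul_im, Complex.conj_re, Complex.conj_im, Complex.star_def]
    ring
  have hW0 : Tendsto W (𝓝[≠] t₀) (𝓝 0) := by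
    simpa [W, h0] using (hW t₀).continuousAt.tendsto.mono_left nhdsWithin_le_nhds
  have hsq0 : Tendsto (fun t => (t - t₀) ^ 2) (𝓝[≠] t₀) (𝓝 0) :=
    ((continuous_id.sub continuous_const).pow 2).tendsto' t₀ 0 (by simp)
      |>.mono_left nhdsWithin_le_nhds
  have hW2 : Tendsto (fun t => W t / (t - t₀) ^ 2) (𝓝[≠] t₀)
      (𝓝 ((F'' t₀ * conj (F' t₀)).im / 2)) := by
    refine HasDerivAt.lhopital_zero_nhdsNE (.of_forall hW) (g' := fun t => 2 * (t - t₀))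
      ?_ ?_ hW0 hsq0 ?_
    · exact .of_forall fun t => by simpa using ((hasDerivAt_id t).sub_const t₀).fun_pow 2
    · filter_upwards [self_mem_nhdsWithin] with t ht
      simpa [sub_eq_zero] using ht
    · refine ((Complex.continuous_im.tendsto _).comp
        ((hF''.tendsto.mono_left nhdsWithin_le_nhds).mul hslope.star)).div_const 2 |>.congr' ?_
      filter_upwards [self_mem_nhdsWithin] with t ht
      have hs : t - t₀ ≠ 0 := sub_ne_zero.mpr ht
      rw [Function.comp_apply, star_div₀, Complex.star_def, Complex.conj_ofReal, ← mul_div_assoc,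
        Complex.div_ofReal_im]
      field_simp
  have hnormSq := (Complex.continuous_normSq.tendsto _).comp hslope
  convert (hW2.div hnormSq (by simpa using h1)).congr' ?_ using 2
  · rw [Complex.im_div_eq_im_mul_conj]
    ring
  filter_upwards [self_mem_nhdsWithin] with t ht
  have hs : (t - t₀) ^ 2 ≠ 0 := pow_ne_zero 2 (sub_ne_zero.mpr ht)
  rw [Pi.div_apply, Function.comp_apply, Complex.normSq_div, Complex.normSq_ofReal, ← sq,
    div_div_div_cancel_right₀ hs, Complex.im_div_eq_im_mul_conj]

lemma tendsto_abs_add_div_sub_atTop {X Y : ℝ → ℝ} {t₀ L m : ℝ}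
    (hX : Tendsto X (𝓝[≠] t₀) (𝓝 L)) (hY : Tendsto Y (𝓝[≠] t₀) (𝓝 m)) (hm : m ≠ 0) :
    Tendsto (fun t => |X t + Y t / (t - t₀)|) (𝓝[≠] t₀) atTop := by
  have hsub : Tendsto (fun t => t - t₀) (𝓝[≠] t₀) (𝓝[≠] 0) := by
    refine tendsto_nhdsWithin_iff.mpr ⟨?_, ?_⟩
    · exact (continuous_sub_right t₀).tendsto' t₀ 0 (sub_self t₀) |>.mono_left nhdsWithin_le_nhds
    · filter_upwards [self_mem_nhdsWithin] with t ht
      exact sub_ne_zero.mpr ht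
  have hnum : Tendsto (fun t => |(t - t₀) * X t + Y t|) (𝓝[≠] t₀) (𝓝 |m|) := by
    simpa using ((hsub.mono_right nhdsWithin_le_nhds).mul hX |>.add hY).abs
  refine (hnum.pos_mul_atTop (abs_pos.mpr hm)
    (tendsto_norm_inv_nhdsNE_zero_atTop.comp hsub)).congr' ?_
  filter_upwards [self_mem_nhdsWithin] with t ht
  have hs : t - t₀ ≠ 0 := sub_ne_zero.mpr ht
  rw [Function.comp_apply, Real.norm_eq_abs, ← abs_mul]
  congr 1
  field_simp

theorem chu_mei_quotient_unbounded_generic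
    (F : ℝ → ℂ) (hF : ContDiff ℝ 2 F) (t₀ : ℝ)
    (h0 : F t₀ = 0) (h1 : deriv F t₀ ≠ 0)
    (h2 : (deriv (deriv F) t₀ * (starRingEnd ℂ) (deriv F t₀)).re ≠ 0)
    (a : ℝ → ℝ) (ha : a = fun t => ‖F t‖) :
    Tendsto (fun t => |deriv (deriv a) t / a t|) (𝓝[≠] t₀) atTop := by
  have hdF : ContDiff ℝ 1 (deriv F) := hF.iterate_deriv' 1 1
  have hF' : ∀ t, HasDerivAt F (deriv F t) t :=
    fun t => (hF.differentiable two_ne_zero t).hasDerivAt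
  have hF'' : ∀ t, HasDerivAt (deriv F) (deriv (deriv F) t) t :=
    fun t => (hdF.differentiable one_ne_zero t).hasDerivAt
  have hF''c : ContinuousAt (deriv (deriv F)) t₀ := (hdF.continuous_deriv le_rfl).continuousAt
  have hslope := (hF' t₀).tendsto_div_sub_of_eq_zero h0
  have hre : Tendsto (fun t => (deriv (deriv F) t / (F t / (t - t₀ : ℝ))).re) (𝓝[≠] t₀)
      (𝓝 (deriv (deriv F) t₀ / deriv F t₀).re) :=
    (Complex.continuous_re.tendsto _).comp
      ((hF''c.tendsto.mono_left nhdsWithin_le_nhds).div hslope h1)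
  have hre0 : (deriv (deriv F) t₀ / deriv F t₀).re ≠ 0 := by
    rw [Complex.re_div_eq_re_mul_conj]
    exact div_ne_zero h2 (by simpa using h1)
  refine (tendsto_abs_add_div_sub_atTop
    ((tendsto_im_div_of_simple_zero hF' hF'' hF''c h0 h1).pow 2) hre hre0).congr' ?_
  filter_upwards [hslope.eventually_ne h1, self_mem_nhdsWithin] with t hFt ht
  have hs : t - t₀ ≠ 0 := sub_ne_zero.mpr ht
  rw [ha, deriv_deriv_norm_div_norm hF' (hF'' t) (div_ne_zero_iff.mp hFt).1, div_div_eq_mul_div,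
    mul_div_right_comm, Complex.re_mul_ofReal, mul_div_cancel_right₀ _ hs]
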